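/- arXiv:2409.12032 — 2 statements merged into one kernel-verified Lean document; each statement's English description precedes it below -/
import Mathlib

section
/- For each η ∈ {-1,0,1,2,3}, the quadratic form on ℤ³ with Gram matrix rows (3,1,3), (1,3,η), (3,η,7) admits no vector of norm 2, i.e., there is no v ∈ ℤ³ with vᵀMv = 2. -/
open Matrix

theorem stmt_3 (η : ℤ) (hη : η = -1 ∨ η = 0 ∨ η = 1 ∨ η = 2 ∨ η = 3) (v : Fin 3 → ℤ) :
    v ⬝ᵥ (!![3, 1, 3; 1, 3, η; 3, η, 7] : Matrix (Fin 3) (Fin 3) ℤ).mulVec v ≠ 2 := by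
  intro h
  simp [Matrix.mulVec, dotProduct, Fin.sum_univ_three, Matrix.cons_val_zero,
    Matrix.cons_val_one] at h
  set a := v 0 with ha
  set b := v 1 with hb
  set c := v 2 with hc
  have hη1 : -1 ≤ η := by rcases hη with h|h|h|h|h <;> omega
  have hη2 : η ≤ 3 := by rcases hη with h|h|h|h|h <;> omega
  have hc0 : c = 0 := by
    have h1 : c ^ 2 ≤ 0 := by
      nlinarith [sq_nonneg (3*a + b + 3*c), sq_nonneg (8*b + 3*(η-1)*c), sq_nonneg c,
        sq_nonneg (c*(η+1)), sq_nonneg (c*(η-3)), mul_nonneg (mul_self_nonneg c) (mul_nonneg (by linarith : (0:ℤ) ≤ η + 1) (by linarith : (0:ℤ) ≤ 3 - η))]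
    nlinarith [sq_nonneg c]
  rw [hc0] at h
  have hb0 : b = 0 := by
    have h1 : b ^ 2 ≤ 0 := by nlinarith [sq_nonneg (3*a + b)]
    nlinarith [sq_nonneg b]
  rw [hb0] at h
  have ha0 : a = 0 := by
    have h1 : a ^ 2 ≤ 0 := by nlinarith [hb0]
    nlinarith [sq_nonneg a, h1]
  rw [ha0] at h; norm_num at h
end

section
/- For each γ ∈ {-2,-1,0,1,2,3,4}, the quadratic form on ℤ³ with Gram matrix rows (3,1,4), (1,3,γ), (4,γ,12) admits no vector of norm 2. -/
open Matrix

lemma aux8 (γ a b c : ℤ) (h1 : -2 ≤ γ) (h2 : γ ≤ 4)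
    (h : 3*a^2+3*b^2+12*c^2+2*a*b+8*a*c+2*γ*b*c = 2) : False := by
  have hγ2 : (6*γ-8)^2 ≤ 400 := by nlinarith [mul_nonneg (by linarith : (0:ℤ) ≤ γ+2) (by linarith : (0:ℤ) ≤ 4-γ)]
  have hc2 : c^2 ≤ 0 := by nlinarith [sq_nonneg (3*a+b+4*c), sq_nonneg (16*b+(6*γ-8)*c), sq_nonneg c, mul_le_mul_of_nonneg_right hγ2 (sq_nonneg c)]
  have hc : c = 0 := by nlinarith [sq_nonneg c]
  subst hc
  have hb : b = 0 := by nlinarith [sq_nonneg (3*a+b), sq_nonneg b]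
  subst hb
  have ha1 : a ≤ 0 := by nlinarith [sq_nonneg (a-1)]
  have ha2 : 0 ≤ a := by nlinarith [sq_nonneg (a+1)]
  have : a = 0 := le_antisymm ha1 ha2
  subst this; simp at h

theorem stmt_8 (γ : ℤ)
    (hγ : γ = -2 ∨ γ = -1 ∨ γ = 0 ∨ γ = 1 ∨ γ = 2 ∨ γ = 3 ∨ γ = 4) (v : Fin 3 → ℤ) :
    v ⬝ᵥ (!![3, 1, 4; 1, 3, γ; 4, γ, 12] : Matrix (Fin 3) (Fin 3) ℤ).mulVec v ≠ 2 := by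
  intro h
  have h1 : (-2:ℤ) ≤ γ := by rcases hγ with h|h|h|h|h|h|h <;> omega
  have h2 : γ ≤ 4 := by rcases hγ with h|h|h|h|h|h|h <;> omega
  simp [Matrix.mulVec, dotProduct, Fin.sum_univ_three] at h
  exact aux8 γ (v 0) (v 1) (v 2) h1 h2 (by ring_nf; ring_nf at h; linarith)
end
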